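/- arXiv:2302.10995 — 6 statements merged into one kernel-verified Lean document; each statement's English description precedes it below -/
import Mathlib

section
/- If λ = (λ₁,…,λ_n) ∈ ℂⁿ has pairwise distinct entries, then the inverse of the Vandermonde matrix V_λ has entries [V_λ^{-1}]_{ij} = (-1)^{n-1} · a_{j-1, λ_{¬i}} / ∏_{k≠i} (λ_k - λ_i), where a_{k,μ} is the companion coefficient (signed elementary symmetric polynomial) of μ. -/
open Finset

noncomputable def acoef {R : Type*} [CommRing R] {n : ℕ} (lam : Fin n → R) (k : ℤ) : R :=
  if 0 ≤ k ∧ k ≤ (n : ℤ) then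
    (-1 : R) ^ (n - k.toNat) *
      ∑ I ∈ Finset.univ.powersetCard (n - k.toNat), ∏ i ∈ I, lam i
  else 0

def removeEntry {α : Type*} {n : ℕ} (lam : Fin n → α) (i : Fin n) : Fin (n - 1) → α :=
  fun j => lam (Fin.cast (Nat.succ_pred_eq_of_pos i.pos)
    ((Fin.cast (Nat.succ_pred_eq_of_pos i.pos).symm i).succAbove j))

def Vand {n : ℕ} (lam : Fin n → ℂ) : Matrix (Fin n) (Fin n) ℂ :=
  Matrix.of fun i j => lam j ^ (i : ℕ)

open Polynomial in
lemma coeff_eq_acoef {m : ℕ} (μ : Fin m → ℂ) (j : ℕ) (hj : j ≤ m) :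
    (∏ k, (X - C (μ k))).coeff j = acoef μ (j : ℤ) := by
  have h1 : (∏ k, (X - C (μ k))) = ((Finset.univ.val.map μ).map (fun t => X - C t)).prod := by
    rw [Multiset.map_map, Finset.prod_eq_multiset_prod]; rfl
  have hcard : Multiset.card (Finset.univ.val.map μ) = m := by simp
  have hj' : j ≤ Multiset.card (Finset.univ.val.map μ) := by rw [hcard]; exact hj
  rw [h1, Multiset.prod_X_sub_C_coeff _ hj', hcard, Finset.esymm_map_val]
  rw [acoef, if_pos ⟨by positivity, by exact_mod_cast hj⟩]
  simp

open Polynomial in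
lemma sum_acoef_mul_pow {m : ℕ} (μ : Fin m → ℂ) (x : ℂ) :
    ∑ j : Fin (m + 1), acoef μ ((j : ℕ) : ℤ) * x ^ (j : ℕ) = ∏ k, (x - μ k) := by
  set P : ℂ[X] := ∏ k, (X - C (μ k)) with hP
  have hdeg : P.natDegree = m := by
    simp [hP, Polynomial.natDegree_prod_of_monic _ _ (fun k _ => monic_X_sub_C (μ k))]
  have heval : P.eval x = ∏ k, (x - μ k) := by simp [hP, eval_prod]
  have h2 : P.eval x = ∑ j ∈ Finset.range (m + 1), P.coeff j * x ^ j := by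
    rw [Polynomial.eval_eq_sum_range' (by omega : P.natDegree < m + 1)]
  rw [← heval, h2, Finset.sum_range fun j => P.coeff j * x ^ j]
  exact Finset.sum_congr rfl fun j _ => by rw [coeff_eq_acoef μ j (by omega)]

lemma prod_removeEntry {n : ℕ} {α : Type*} (lam : Fin n → α) (i : Fin n)
    (F : α → ℂ) :
    ∏ j : Fin (n - 1), F (removeEntry lam i j) = ∏ k ∈ Finset.univ.erase i, F (lam k) := by
  have hpos := i.pos
  set e : Fin (n - 1) → Fin n := fun j => Fin.cast (Nat.succ_pred_eq_of_pos hpos)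
    ((Fin.cast (Nat.succ_pred_eq_of_pos hpos).symm i).succAbove j) with he
  refine Finset.prod_bij (fun j _ => e j) ?_ ?_ ?_ ?_
  · intro j _
    simp only [Finset.mem_erase, Finset.mem_univ, and_true, he]
    intro hcontra
    refine (Fin.succAbove_ne (Fin.cast (Nat.succ_pred_eq_of_pos hpos).symm i) j) ?_
    apply Fin.cast_injective (Nat.succ_pred_eq_of_pos hpos)
    simpa using hcontra
  · intro a _ b _ hab
    exact Fin.succAbove_right_injective
      (Fin.cast_injective (Nat.succ_pred_eq_of_pos hpos) hab)
  · intro k hk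
    have hki : k ≠ i := (Finset.mem_erase.mp hk).1
    obtain ⟨j, hj⟩ := Fin.exists_succAbove_eq
      (by
        intro hcontra
        apply hki
        have := congrArg (Fin.cast (Nat.succ_pred_eq_of_pos hpos)) hcontra
        simpa using this :
        (Fin.cast (Nat.succ_pred_eq_of_pos hpos).symm k) ≠
          (Fin.cast (Nat.succ_pred_eq_of_pos hpos).symm i))
    exact ⟨j, Finset.mem_univ j, by simp [he, hj]⟩
  · intro j _
    rfl

/-- Explicit entries of the inverse Vandermonde matrix. -/
theorem vandermonde_inverse_entries (n : ℕ) (lam : Fin n → ℂ)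
    (h : Function.Injective lam) (i j : Fin n) :
    (Vand lam)⁻¹ i j =
      (-1 : ℂ) ^ (n - 1) * acoef (removeEntry lam i) ((j : ℕ) : ℤ) /
        ∏ k ∈ Finset.univ.erase i, (lam k - lam i) := by
  obtain ⟨m, rfl⟩ : ∃ m, n = m + 1 := ⟨n - 1, by have := i.pos; omega⟩
  set D : Fin (m + 1) → ℂ := fun i => ∏ k ∈ Finset.univ.erase i, (lam k - lam i) with hD
  have hDne : ∀ i, D i ≠ 0 := by
    intro i
    rw [hD, Finset.prod_ne_zero_iff]
    intro k hk
    exact sub_ne_zero_of_ne (fun hc => (Finset.mem_erase.mp hk).1 (h hc))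
  set B : Matrix (Fin (m + 1)) (Fin (m + 1)) ℂ := Matrix.of fun i j =>
    (-1 : ℂ) ^ m * acoef (removeEntry lam i) ((j : ℕ) : ℤ) / D i with hB
  have key : B * Vand lam = 1 := by
    ext i c
    rw [Matrix.mul_apply]
    have hstep : ∀ x ∈ Finset.univ, B i x * Vand lam x c =
        ((-1 : ℂ) ^ m / D i) * (acoef (removeEntry lam i) ((x : ℕ) : ℤ) * lam c ^ (x : ℕ)) := by
      intro x _
      simp only [hB, Vand, Matrix.of_apply]
      ring
    have hsum : ∑ x : Fin (m + 1), acoef (removeEntry lam i) ((x : ℕ) : ℤ) * lam c ^ (x : ℕ)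
        = ∏ k, (lam c - removeEntry lam i k) :=
      sum_acoef_mul_pow (removeEntry lam i) (lam c)
    rw [Finset.sum_congr rfl hstep, ← Finset.mul_sum, hsum,
      prod_removeEntry lam i (fun t => lam c - t)]
    by_cases hci : c = i
    · subst hci
      have hprod : ∏ k ∈ Finset.univ.erase c, (lam c - lam k)
          = (-1 : ℂ) ^ m * D c := by
        have h1 : ∀ k ∈ Finset.univ.erase c, lam c - lam k = (-1) * (lam k - lam c) := by
          intro k _; ring
        rw [Finset.prod_congr rfl h1, Finset.prod_mul_distrib, Finset.prod_const,
          Finset.card_erase_of_mem (Finset.mem_univ c), Finset.card_univ, Fintype.card_fin,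
          Nat.add_sub_cancel, hD]
      rw [hprod, Matrix.one_apply_eq]
      rw [div_mul_eq_mul_div, ← mul_assoc, ← pow_add, ← two_mul, pow_mul]
      simp [mul_div_assoc, div_self (hDne c)]
    · rw [Finset.prod_eq_zero (Finset.mem_erase.mpr ⟨hci, Finset.mem_univ c⟩) (by ring),
        mul_zero, Matrix.one_apply_ne' hci]
  have hinv : (Vand lam)⁻¹ = B := Matrix.inv_eq_left_inv key
  rw [hinv]
  rfl
end

section
/- For λ ∈ ℂⁿ with pairwise distinct entries, the Vandermonde basis functions satisfy v_{0,λ}(0) = 1 and v_{k,λ}(0) = 0 for all k = 1, …, n-1. -/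
open Finset

noncomputable def vbasisC {n : ℕ} (lam : Fin n → ℂ) (k : ℤ) (t : ℝ) : ℂ :=
  (-1 : ℂ) ^ (n - 1) *
    ∑ i : Fin n, acoef (removeEntry lam i) k /
      (∏ j ∈ Finset.univ.erase i, (lam j - lam i)) * Complex.exp (lam i * t)

open Polynomial

/-!
At `t = 0` the exponentials equal `1`, and `(-1)^(n-1) / ∏_{j ≠ i} (λ_j - λ_i)` is the Lagrange
nodal weight `∏_{j ≠ i} (λ_i - λ_j)⁻¹`. By Vieta, `a_{k, λ_{¬i}}` is the `k`-th coefficient of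
`∏_{j ≠ i} (X - λ_j)`, so `v_{k,λ}(0)` is the `k`-th coefficient of `∑_i ℓ_i`, where `ℓ_i` are the
Lagrange basis polynomials at the nodes `λ`. That sum is the constant polynomial `1`.
-/

section RemoveEntry

variable {n : ℕ}

/-- `removeEntry lam i` is `lam ∘ removeEntryEmb i` definitionally. -/
def removeEntryEmb (i : Fin n) : Fin (n - 1) ↪ Fin n where
  toFun j := Fin.cast (Nat.succ_pred_eq_of_pos i.pos)
    ((Fin.cast (Nat.succ_pred_eq_of_pos i.pos).symm i).succAbove j)
  inj' _ _ h := Fin.succAbove_right_injective (Fin.cast_injective _ h)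

theorem map_removeEntryEmb_univ (i : Fin n) :
    univ.map (removeEntryEmb i) = univ.erase i := by
  refine eq_of_subset_of_card_le (fun x hx => ?_) (by simp)
  obtain ⟨j, -, rfl⟩ := mem_map.mp hx
  have hpos := Nat.succ_pred_eq_of_pos i.pos
  exact mem_erase.mpr ⟨fun hj => Fin.succAbove_ne _ j (Fin.cast_injective hpos hj), mem_univ _⟩

end RemoveEntry

theorem acoef_eq_coeff_prod_X_sub_C {R : Type*} [CommRing R] {m : ℕ} (mu : Fin m → R) {k : ℕ}
    (hk : k ≤ m) : acoef mu k = (∏ j, (X - C (mu j))).coeff k := by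
  have hprod : ∏ j, (X - C (mu j)) = ((univ.val.map mu).map fun t => X - C t).prod := by
    rw [Multiset.map_map]; rfl
  rw [hprod, Multiset.prod_X_sub_C_coeff _ (by simpa using hk), Finset.esymm_map_val, acoef,
    if_pos ⟨by positivity, by exact_mod_cast hk⟩]
  simp

theorem acoef_removeEntry_eq_coeff_nodal {R : Type*} [CommRing R] {n : ℕ} (lam : Fin n → R)
    (i : Fin n) {k : ℕ} (hk : k ≤ n - 1) :
    acoef (removeEntry lam i) k = (Lagrange.nodal (univ.erase i) lam).coeff k := by
  rw [acoef_eq_coeff_prod_X_sub_C _ hk, Lagrange.nodal, ← map_removeEntryEmb_univ, prod_map]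
  rfl

theorem Lagrange.basis_eq_C_nodalWeight_mul_nodal_erase {F ι : Type*} [Field F] [DecidableEq ι]
    (s : Finset ι) (v : ι → F) (i : ι) :
    Lagrange.basis s v i = C (Lagrange.nodalWeight s v i) * Lagrange.nodal (s.erase i) v := by
  simp_rw [Lagrange.basis, Lagrange.basisDivisor, Lagrange.nodalWeight, prod_mul_distrib,
    map_prod, Lagrange.nodal]

theorem neg_one_pow_div_prod_erase_sub {F : Type*} [Field F] {n : ℕ} (lam : Fin n → F)
    (i : Fin n) (a : F) :
    (-1 : F) ^ (n - 1) * (a / ∏ j ∈ univ.erase i, (lam j - lam i)) =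
      Lagrange.nodalWeight univ lam i * a := by
  have hsign : ∏ j ∈ univ.erase i, (lam j - lam i) =
      (-1 : F) ^ (n - 1) * ∏ j ∈ univ.erase i, (lam i - lam j) := by
    simp_rw [← neg_sub (lam i), prod_neg, card_erase_of_mem (mem_univ i), card_univ,
      Fintype.card_fin]
  rw [hsign, ← mul_div_assoc, mul_div_mul_left _ _ (pow_ne_zero _ (neg_ne_zero.mpr one_ne_zero)),
    Lagrange.nodalWeight, prod_inv_distrib, div_eq_inv_mul]

theorem vbasisC_zero_eq_coeff_sum_basis {n : ℕ} (lam : Fin n → ℂ) {k : ℕ} (hk : k ≤ n - 1) :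
    vbasisC lam k 0 = (∑ i, Lagrange.basis univ lam i).coeff k := by
  simp only [vbasisC, Complex.ofReal_zero, mul_zero, Complex.exp_zero, mul_one, mul_sum,
    finsetSum_coeff, Lagrange.basis_eq_C_nodalWeight_mul_nodal_erase, coeff_C_mul,
    neg_one_pow_div_prod_erase_sub, acoef_removeEntry_eq_coeff_nodal lam _ hk]

/-- Initial values of the Vandermonde basis functions. -/
theorem vandermonde_basis_initial_values (n : ℕ) (hn : 0 < n) (lam : Fin n → ℂ)
    (h : Function.Injective lam) :
    vbasisC lam 0 0 = 1 ∧ ∀ k : ℕ, 1 ≤ k → k < n → vbasisC lam (k : ℤ) 0 = 0 := by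
  have hcoeff : ∀ k : ℕ, k < n → vbasisC lam k 0 = (1 : ℂ[X]).coeff k := fun k hk => by
    rw [vbasisC_zero_eq_coeff_sum_basis lam (Nat.le_pred_of_lt hk),
      Lagrange.sum_basis h.injOn (univ_nonempty_iff.mpr ⟨⟨0, hn⟩⟩)]
  refine ⟨by simpa using hcoeff 0 hn, fun k hk1 hkn => ?_⟩
  rw [hcoeff k hkn, coeff_one, if_neg (by omega)]
end

section
/- For λ ∈ ℂⁿ with pairwise distinct entries, the row vector of Vandermonde basis functions v_λ(t) = (v_{0,λ}(t), …, v_{n-1,λ}(t)) satisfies the transposed companion ODE d/dt v_λ(t) = v_λ(t) C_λ, where C_λ is the companion matrix with subdiagonal of 1's above and last row (-a_{0,λ}, …, -a_{n-1,λ}); equivalently, componentwise, v'_{k,λ}(t) = v_{k-1,λ}(t) - a_{k,λ} v_{n-1,λ}(t) with v_{-1,λ} := 0. -/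
/-!
The numbers `acoef lam k` are the coefficients of `p = ∏ i, (X - lam i)` (Vieta), and
`p = (X - lam i) * p_i` where `p_i` is the same product with `lam i` removed. Comparing
coefficients gives `lam i * a_k(p_i) = a_{k-1}(p_i) - a_k(p)`, and `a_{n-1}(p_i) = 1` since `p_i` is
monic of degree `n - 1`. Now `v_k` is a combination of the `exp (lam i * t)` whose `i`-th
coefficient is a fixed multiple of `a_k(p_i)`; differentiating multiplies that coefficient by
`lam i`, and the identity above turns the result into `v_{k-1} - a_k(p) v_{n-1}`.
-/

open Finset

open Polynomial

section Coefficients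

variable {R : Type*} [CommRing R]

theorem acoef_natCast_eq_coeff {n : ℕ} (lam : Fin n → R) (k : ℕ) :
    acoef lam k = (∏ i, (X - C (lam i))).coeff k := by
  rcases le_or_gt k n with hk | hk
  · have hcoeff := (univ.val.map lam).prod_X_sub_C_coeff (k := k) (by simpa using hk)
    rw [Multiset.map_map, Multiset.card_map, card_val, card_univ, Fintype.card_fin,
      esymm_map_val] at hcoeff
    rw [acoef, if_pos ⟨k.cast_nonneg, by exact_mod_cast hk⟩, Int.toNat_natCast,
      prod_eq_multiset_prod, ← hcoeff]
    rfl
  · have hdeg : (∏ i, (X - C (lam i))).natDegree ≤ n :=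
      (natDegree_prod_le _ _).trans <|
        (sum_le_card_nsmul _ _ 1 fun i _ => natDegree_X_sub_C_le _).trans (by simp)
    rw [acoef, if_neg (by omega), coeff_eq_zero_of_natDegree_lt (hdeg.trans_lt hk)]

theorem acoef_of_neg {n : ℕ} (lam : Fin n → R) {k : ℤ} (hk : k < 0) :
    acoef lam k = 0 :=
  if_neg (by omega)

theorem acoef_card {n : ℕ} (lam : Fin n → R) :
    acoef lam n = 1 := by
  simp [acoef]

theorem prod_X_sub_C_eq_mul_removeEntry {m : ℕ} (lam : Fin (m + 1) → R)
    (i : Fin (m + 1)) :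
    ∏ j, (X - C (lam j)) = (∏ j, (X - C (removeEntry lam i j))) * (X - C (lam i)) := by
  rw [Fin.prod_univ_succAbove _ i, mul_comm]
  rfl

theorem mul_acoef_removeEntry {m : ℕ} (lam : Fin (m + 1) → R)
    (i : Fin (m + 1)) (k : ℕ) :
    lam i * acoef (removeEntry lam i) k = acoef (removeEntry lam i) (k - 1) - acoef lam k := by
  rw [acoef_natCast_eq_coeff, acoef_natCast_eq_coeff, prod_X_sub_C_eq_mul_removeEntry lam i]
  rcases k with _ | k
  · simp [acoef_of_neg, mul_coeff_zero, mul_comm]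
  · rw [Nat.cast_succ, add_sub_cancel_right, acoef_natCast_eq_coeff, coeff_mul_X_sub_C]
    ring

end Coefficients

-- The entry `(i, k)` of the inverse of the Vandermonde matrix of `lam`.
noncomputable def vbasisCoeff {n : ℕ} (lam : Fin n → ℂ) (k : ℤ) (i : Fin n) : ℂ :=
  (-1) ^ (n - 1) * acoef (removeEntry lam i) k / ∏ j ∈ univ.erase i, (lam j - lam i)

theorem vbasisC_eq_sum {n : ℕ} (lam : Fin n → ℂ) (k : ℤ) :
    vbasisC lam k = fun t : ℝ => ∑ i, vbasisCoeff lam k i * Complex.exp (lam i * t) := by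
  ext t
  rw [vbasisC, mul_sum]
  refine sum_congr rfl fun i _ => ?_
  rw [vbasisCoeff]
  ring

theorem hasDerivAt_vbasisC {n : ℕ} (lam : Fin n → ℂ) (k : ℤ) (t : ℝ) :
    HasDerivAt (vbasisC lam k)
      (∑ i, vbasisCoeff lam k i * (lam i * Complex.exp (lam i * t))) t := by
  rw [vbasisC_eq_sum]
  refine HasDerivAt.fun_sum fun i _ => HasDerivAt.const_mul _ ?_
  have hlin : HasDerivAt (fun s : ℝ => lam i * s) (lam i) t := by
    simpa using (Complex.ofRealCLM.hasDerivAt (x := t)).const_mul (lam i)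
  simpa [mul_comm] using hlin.cexp

theorem mul_vbasisCoeff {m : ℕ} (lam : Fin (m + 1) → ℂ) (k : ℕ) (i : Fin (m + 1)) :
    lam i * vbasisCoeff lam k i =
      vbasisCoeff lam (k - 1) i - acoef lam k * vbasisCoeff lam m i := by
  have htop : acoef (removeEntry lam i) (m : ℤ) = 1 := acoef_card _
  simp only [vbasisCoeff, htop, Nat.add_sub_cancel]
  linear_combination
    (-1) ^ m / (∏ j ∈ univ.erase i, (lam j - lam i)) * mul_acoef_removeEntry lam i k

theorem vandermonde_basis_dynamics_general (n : ℕ) (lam : Fin n → ℂ) (k : ℕ) (t : ℝ) :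
    HasDerivAt (fun s : ℝ => vbasisC lam (k : ℤ) s)
      (vbasisC lam ((k : ℤ) - 1) t - acoef lam (k : ℤ) * vbasisC lam ((n : ℤ) - 1) t) t := by
  rcases n with _ | m
  · simpa [vbasisC] using hasDerivAt_const t (0 : ℂ)
  · convert hasDerivAt_vbasisC lam k t using 1
    rw [vbasisC_eq_sum, vbasisC_eq_sum, Nat.cast_succ, add_sub_cancel_right, mul_sum,
      ← sum_sub_distrib]
    refine sum_congr rfl fun i _ => ?_
    linear_combination -Complex.exp (lam i * t) * mul_vbasisCoeff lam k i

/-- Componentwise Vandermonde basis dynamics: v'_k = v_{k-1} - a_k v_{n-1}. -/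
theorem vandermonde_basis_dynamics (n : ℕ) (lam : Fin n → ℂ)
    (h : Function.Injective lam) (k : ℕ) (hk : k < n) (t : ℝ) :
    HasDerivAt (fun s : ℝ => vbasisC lam (k : ℤ) s)
      (vbasisC lam ((k : ℤ) - 1) t - acoef lam (k : ℤ) * vbasisC lam ((n : ℤ) - 1) t) t :=
  vandermonde_basis_dynamics_general n lam k t
end

section
/- If λ = (λ₁,…,λ_n) ∈ ℝⁿ has pairwise distinct, strictly negative entries, then for every i ∈ {1,…,n} and every k ∈ {1,…,n-1} the Vandermonde basis functions satisfy the relative ordering a_{k, λ_{¬i}} · v_{k-1,λ}(t) ≥ a_{k-1, λ_{¬i}} · v_{k,λ}(t) for all t ≥ 0. -/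
open Finset

noncomputable def vbasisR {n : ℕ} (lam : Fin n → ℝ) (k : ℤ) (t : ℝ) : ℝ :=
  (-1 : ℝ) ^ (n - 1) *
    ∑ i : Fin n, acoef (removeEntry lam i) k /
      (∏ j ∈ Finset.univ.erase i, (lam j - lam i)) * Real.exp (lam i * t)

/-!
Let `Q` be the nodal polynomial of the nodes other than `λᵢ`, so that `a_{k,λ_{¬i}} = Q_k`, and let
`T(t)` be the divided difference of `x ↦ e^{xt}` at all nodes. Removing the node `λᵢ` from the
Lagrange basis gives `v_{k,λ} = v_{k,λ_{¬i}} + Q_k T`, which reduces the claim to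
`Q_{k-1} v_{k,λ_{¬i}} ≤ Q_k v_{k-1,λ_{¬i}}`. This cross log-concavity of the pair
(coefficients of the nodal polynomial, basis functions) holds for every set of nonpositive nodes, by
induction on the nodes together with the nonnegativity of the basis functions: multiplying the nodal
polynomial by `X - x` with `x ≤ 0` preserves it, and so does adding a nonnegative multiple of the
coefficients themselves, which are log-concave. Finally `T ≥ 0` for `t ≥ 0` since
`T' = λᵢ T + T_{¬i}` with `T(0) ≥ 0`, and `T_{¬i} ≥ 0` by induction.
-/

open Polynomial Lagrange

def CrossLogConcave {R : Type*} [Mul R] [LE R] (c d : ℕ → R) : Prop :=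
  ∀ a b, a ≤ b → c a * d (b + 1) ≤ c (a + 1) * d b

namespace CrossLogConcave

variable {R : Type*} [CommRing R] [LinearOrder R] [IsStrictOrderedRing R] {c d e : ℕ → R}

theorem add (hd : CrossLogConcave c d) (he : CrossLogConcave c e) :
    CrossLogConcave c (d + e) := fun a b hab => by
  simp only [Pi.add_apply, mul_add]
  exact add_le_add (hd a b hab) (he a b hab)

theorem smul {u : R} (hu : 0 ≤ u) (hd : CrossLogConcave c d) : CrossLogConcave c (u • d) :=
  fun a b hab => by
  simp only [Pi.smul_apply, smul_eq_mul, mul_left_comm _ u]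
  exact mul_le_mul_of_nonneg_left (hd a b hab) hu

theorem X_sub_C_mul {p : R[X]} {x : R} (hx : x ≤ 0) (hp : 0 ≤ p.coeff 0) (hd : ∀ j, 0 ≤ d j)
    (h : CrossLogConcave p.coeff d) : CrossLogConcave ((X - C x) * p).coeff d := by
  rintro (_ | a) b hab
  · have h₀ := mul_nonneg_of_nonpos_of_nonpos hx (sub_nonpos.2 (h 0 b hab))
    have h₁ := mul_nonneg hp (hd b)
    simp only [mul_coeff_zero, coeff_sub, coeff_X_zero, coeff_C_zero, zero_sub, coeff_X_sub_C_mul]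
    linarith
  · have h₀ := mul_nonneg_of_nonpos_of_nonpos hx (sub_nonpos.2 (h (a + 1) b hab))
    have h₁ := h a b (by omega)
    simp only [coeff_X_sub_C_mul]
    linarith

theorem X_sub_C_mul_self {p : R[X]} {x : R} (hx : x ≤ 0)
    (h : CrossLogConcave ((X - C x) * p).coeff p.coeff) :
    CrossLogConcave ((X - C x) * p).coeff ((X - C x) * p).coeff := by
  intro a b hab
  obtain rfl | hlt := hab.eq_or_lt
  · exact (mul_comm _ _).le
  obtain ⟨b, rfl⟩ : ∃ b', b = b' + 1 := ⟨b - 1, by omega⟩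
  have h₀ := mul_nonneg_of_nonpos_of_nonpos hx (sub_nonpos.2 (h a (b + 1) (by omega)))
  have h₁ := h a b (by omega)
  simp only [coeff_X_sub_C_mul] at h₀ h₁ ⊢
  linarith

end CrossLogConcave

theorem coeff_nodal_nonneg {ι R : Type*} [CommRing R] [LinearOrder R] [IsStrictOrderedRing R]
    {s : Finset ι} {v : ι → R} (hv : ∀ i ∈ s, v i ≤ 0) (k : ℕ) : 0 ≤ (nodal s v).coeff k := by
  classical
  induction s using Finset.induction_on generalizing k with
  | empty => rw [nodal_empty, coeff_one]; split_ifs <;> norm_num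
  | insert i s hi ih =>
    have hvi := hv i (mem_insert_self i s)
    have ih' := ih fun j hj => hv j (mem_insert_of_mem hj)
    rw [nodal_insert_eq_nodal hi]
    rcases k with _ | k
    · simp only [mul_coeff_zero, coeff_sub, coeff_X_zero, coeff_C_zero, zero_sub]
      exact mul_nonneg (neg_nonneg.2 hvi) (ih' 0)
    · rw [coeff_X_sub_C_mul]
      linarith [ih' k, mul_nonpos_of_nonpos_of_nonneg hvi (ih' (k + 1))]

theorem crossLogConcave_coeff_nodal {ι R : Type*} [CommRing R] [LinearOrder R]
    [IsStrictOrderedRing R] {s : Finset ι} {v : ι → R} (hv : ∀ i ∈ s, v i ≤ 0) :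
    CrossLogConcave (nodal s v).coeff (nodal s v).coeff := by
  classical
  induction s using Finset.induction_on with
  | empty => intro a b _; simp [coeff_one]
  | insert i s hi ih =>
    have hvi := hv i (mem_insert_self i s)
    have hvs : ∀ j ∈ s, v j ≤ 0 := fun j hj => hv j (mem_insert_of_mem hj)
    rw [nodal_insert_eq_nodal hi]
    exact .X_sub_C_mul_self hvi
      (.X_sub_C_mul hvi (coeff_nodal_nonneg hvs 0) (coeff_nodal_nonneg hvs) (ih hvs))

namespace Lagrange

variable {F ι : Type*} [Field F] [DecidableEq ι] {s : Finset ι} {v : ι → F} {i j : ι}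

theorem basis_eq_C_nodalWeight_mul_nodal_erase_s9 (hi : i ∈ s) :
    Lagrange.basis s v i = C (nodalWeight s v i) * nodal (s.erase i) v := by
  rw [basis_eq_prod_sub_inv_mul_nodal_div hi, nodal_erase_eq_nodal_div hi]

theorem nodalWeight_mul_sub (hvs : Set.InjOn v s) (hi : i ∈ s) (hj : j ∈ s.erase i) :
    nodalWeight s v j * (v j - v i) = nodalWeight (s.erase i) v j := by
  obtain ⟨hji, hjs⟩ := mem_erase.1 hj
  have hne : v j - v i ≠ 0 := sub_ne_zero.2 fun h => hji (hvs hjs hi h)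
  rw [nodalWeight, ← mul_prod_erase _ _ (mem_erase.2 ⟨hji.symm, hi⟩), erase_right_comm,
    mul_right_comm, inv_mul_cancel₀ hne, one_mul, nodalWeight]

theorem basis_eq_basis_erase_add (hvs : Set.InjOn v s) (hi : i ∈ s) (hj : j ∈ s.erase i) :
    Lagrange.basis s v j =
      Lagrange.basis (s.erase i) v j + C (nodalWeight s v j) * nodal (s.erase i) v := by
  obtain ⟨hji, hjs⟩ := mem_erase.1 hj
  rw [basis_eq_C_nodalWeight_mul_nodal_erase_s9 hjs, basis_eq_C_nodalWeight_mul_nodal_erase_s9 hj,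
    ← nodalWeight_mul_sub hvs hi hj, nodal_eq_mul_nodal_erase (mem_erase.2 ⟨hji.symm, hi⟩),
    nodal_eq_mul_nodal_erase hj, erase_right_comm, map_mul, map_sub]
  ring

end Lagrange

theorem nonneg_of_hasDerivAt_eq_mul_add {f g : ℝ → ℝ} {c : ℝ}
    (hf : ∀ s, HasDerivAt f (c * f s + g s) s) (hf₀ : 0 ≤ f 0) (hg : ∀ s, 0 ≤ s → 0 ≤ g s)
    {t : ℝ} (ht : 0 ≤ t) : 0 ≤ f t := by
  set h : ℝ → ℝ := fun s => Real.exp (-c * s) * f s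
  have hh : ∀ s, HasDerivAt h (Real.exp (-c * s) * g s) s := fun s => by
    refine (((hasDerivAt_id' s).const_mul (-c)).exp.fun_mul (hf s)).congr_deriv ?_
    ring
  have hmono : MonotoneOn h (Set.Ici 0) :=
    monotoneOn_of_hasDerivWithinAt_nonneg (convex_Ici 0)
      (fun s _ => (hh s).continuousAt.continuousWithinAt) (fun s _ => (hh s).hasDerivWithinAt)
      fun s hs => mul_nonneg (Real.exp_pos _).le (hg s (interior_subset hs))
  have hht : h 0 ≤ h t := hmono Set.self_mem_Ici ht ht
  have hft : f t = Real.exp (c * t) * h t := by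
    rw [← mul_assoc, ← Real.exp_add, show c * t + -c * t = 0 by ring, Real.exp_zero, one_mul]
  simp only [h, mul_zero, Real.exp_zero, one_mul] at hht
  rw [hft]
  exact mul_nonneg (Real.exp_pos _).le (hf₀.trans hht)

section VandermondeBasis

variable {ι : Type*} [DecidableEq ι] {s : Finset ι} {v : ι → ℝ} {i : ι}

noncomputable def expDividedDifference (s : Finset ι) (v : ι → ℝ) (t : ℝ) : ℝ :=
  ∑ i ∈ s, nodalWeight s v i * Real.exp (v i * t)

/-- The entry `v_k(t)` of `e^{λt} V_λ⁻¹`: column `k` of `V_λ⁻¹` holds the `X ^ k`-coefficients of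
the Lagrange basis polynomials. -/
noncomputable def vandermondeBasis (s : Finset ι) (v : ι → ℝ) (k : ℕ) (t : ℝ) : ℝ :=
  ∑ i ∈ s, (Lagrange.basis s v i).coeff k * Real.exp (v i * t)

theorem vandermondeBasis_eq_erase_add (hvs : Set.InjOn v s) (hi : i ∈ s) (k : ℕ) (t : ℝ) :
    vandermondeBasis s v k t = vandermondeBasis (s.erase i) v k t +
      (nodal (s.erase i) v).coeff k * expDividedDifference s v t := by
  have hj : ∀ j ∈ s.erase i, (Lagrange.basis s v j).coeff k * Real.exp (v j * t) =
      (Lagrange.basis (s.erase i) v j).coeff k * Real.exp (v j * t) +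
        (nodal (s.erase i) v).coeff k * (nodalWeight s v j * Real.exp (v j * t)) := fun j hj => by
    rw [basis_eq_basis_erase_add hvs hi hj, coeff_add, coeff_C_mul]
    ring
  rw [vandermondeBasis, vandermondeBasis, expDividedDifference, ← add_sum_erase _ _ hi,
    ← add_sum_erase _ _ hi, sum_congr rfl hj, sum_add_distrib, ← mul_sum,
    basis_eq_C_nodalWeight_mul_nodal_erase_s9 hi, coeff_C_mul]
  ring

theorem hasDerivAt_expDividedDifference (hvs : Set.InjOn v s) (hi : i ∈ s) (t : ℝ) :
    HasDerivAt (expDividedDifference s v)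
      (v i * expDividedDifference s v t + expDividedDifference (s.erase i) v t) t := by
  have hderiv := HasDerivAt.fun_sum (u := s) fun j _ =>
    (((hasDerivAt_id' t).const_mul (v j)).exp).const_mul (nodalWeight s v j)
  refine hderiv.congr_deriv ?_
  have hsplit : ∑ j ∈ s, nodalWeight s v j * (Real.exp (v j * t) * (v j * 1)) =
      ∑ j ∈ s, v i * (nodalWeight s v j * Real.exp (v j * t)) +
        ∑ j ∈ s, nodalWeight s v j * (v j - v i) * Real.exp (v j * t) := by
    rw [← sum_add_distrib]
    exact sum_congr rfl fun j _ => by ring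
  have hrest : ∑ j ∈ s, nodalWeight s v j * (v j - v i) * Real.exp (v j * t) =
      expDividedDifference (s.erase i) v t := by
    calc _ = ∑ j ∈ s.erase i, nodalWeight s v j * (v j - v i) * Real.exp (v j * t) :=
          (sum_erase s (by simp)).symm
      _ = _ := sum_congr rfl fun j hj => by rw [nodalWeight_mul_sub hvs hi hj]
  rw [hsplit, hrest, ← mul_sum]
  rfl

theorem expDividedDifference_zero_nonneg (hvs : Set.InjOn v s) :
    0 ≤ expDividedDifference s v 0 := by
  rcases s.eq_empty_or_nonempty with rfl | hs
  · simp [expDividedDifference]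
  have h := Lagrange.coeff_eq_sum hvs (P := 1) (by simpa using hs.card_pos)
  simp only [eval_one, one_div, ← prod_inv_distrib] at h
  simp only [expDividedDifference, mul_zero, Real.exp_zero, mul_one, nodalWeight, ← h,
    coeff_one]
  split_ifs <;> norm_num

theorem expDividedDifference_nonneg (hvs : Set.InjOn v s) {t : ℝ} (ht : 0 ≤ t) :
    0 ≤ expDividedDifference s v t := by
  induction s using Finset.induction_on generalizing t with
  | empty => simp [expDividedDifference]
  | insert i s hi ih =>
    have hvs' := hvs.mono (subset_insert i s)
    refine nonneg_of_hasDerivAt_eq_mul_add (c := v i) (fun t => ?_)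
      (expDividedDifference_zero_nonneg hvs) (fun t ht => ih hvs' ht) ht
    simpa only [erase_insert hi] using hasDerivAt_expDividedDifference hvs (mem_insert_self i s) t

theorem vandermondeBasis_insert (hvs : Set.InjOn v (insert i s : Finset ι)) (hi : i ∉ s) (t : ℝ) :
    (vandermondeBasis (insert i s) v · t) =
      (vandermondeBasis s v · t) + expDividedDifference (insert i s) v t • (nodal s v).coeff := by
  ext k
  rw [vandermondeBasis_eq_erase_add hvs (mem_insert_self i s), erase_insert hi, Pi.add_apply,
    Pi.smul_apply, smul_eq_mul, mul_comm]

theorem vandermondeBasis_nonneg (hvs : Set.InjOn v s) (hv : ∀ i ∈ s, v i ≤ 0) {t : ℝ}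
    (ht : 0 ≤ t) (k : ℕ) : 0 ≤ vandermondeBasis s v k t := by
  induction s using Finset.induction_on with
  | empty => simp [vandermondeBasis]
  | insert i s hi ih =>
    have hvs' : ∀ j ∈ s, v j ≤ 0 := fun j hj => hv j (mem_insert_of_mem hj)
    rw [vandermondeBasis_eq_erase_add hvs (mem_insert_self i s), erase_insert hi]
    exact add_nonneg (ih (hvs.mono (subset_insert i s)) hvs')
      (mul_nonneg (coeff_nodal_nonneg hvs' k) (expDividedDifference_nonneg hvs ht))

theorem crossLogConcave_vandermondeBasis (hvs : Set.InjOn v s) (hv : ∀ i ∈ s, v i ≤ 0) {t : ℝ}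
    (ht : 0 ≤ t) : CrossLogConcave (nodal s v).coeff (vandermondeBasis s v · t) := by
  induction s using Finset.induction_on with
  | empty => intro a b _; simp [vandermondeBasis]
  | insert i s hi ih =>
    have hvi := hv i (mem_insert_self i s)
    have hvs' : ∀ j ∈ s, v j ≤ 0 := fun j hj => hv j (mem_insert_of_mem hj)
    rw [nodal_insert_eq_nodal hi]
    refine .X_sub_C_mul hvi (coeff_nodal_nonneg hvs' 0) (vandermondeBasis_nonneg hvs hv ht) ?_
    rw [vandermondeBasis_insert hvs hi]
    exact (ih (hvs.mono (subset_insert i s)) hvs').add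
      ((crossLogConcave_coeff_nodal hvs').smul (expDividedDifference_nonneg hvs ht))

end VandermondeBasis

theorem Fin.prod_univ_erase {M : Type*} [CommMonoid M] {n : ℕ} (f : Fin (n + 1) → M)
    (i : Fin (n + 1)) : ∏ j ∈ univ.erase i, f j = ∏ j : Fin n, f (i.succAbove j) := by
  rw [Fin.univ_succAbove n i, erase_cons, prod_map, Fin.coe_succAboveEmb]

theorem acoef_eq_coeff_prod {R : Type*} [CommRing R] {m : ℕ} (f : Fin m → R) {k : ℕ}
    (hk : k ≤ m) : acoef f k = (∏ j, (X - C (f j))).coeff k := by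
  have hprod : ∏ j, (X - C (f j)) = ((univ.val.map f).map fun r => X - C r).prod := by
    rw [Multiset.map_map]
    rfl
  rw [acoef, if_pos ⟨Int.natCast_nonneg k, by exact_mod_cast hk⟩, Int.toNat_natCast, hprod,
    Multiset.prod_X_sub_C_coeff _ (by simpa using hk), Multiset.card_map, card_val, card_univ,
    Fintype.card_fin, esymm_map_val]

theorem acoef_removeEntry {R : Type*} [CommRing R] {n : ℕ} (lam : Fin n → R) (i : Fin n) {k : ℕ}
    (hk : k ≤ n - 1) : acoef (removeEntry lam i) k = (nodal (univ.erase i) lam).coeff k := by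
  obtain _ | m := n
  · exact i.elim0
  rw [acoef_eq_coeff_prod _ hk, nodal_eq, Fin.prod_univ_erase]
  rfl

theorem vbasisR_eq_vandermondeBasis {n : ℕ} (lam : Fin n → ℝ) {k : ℕ} (hk : k ≤ n - 1) (t : ℝ) :
    vbasisR lam k t = vandermondeBasis univ lam k t := by
  rw [vbasisR, vandermondeBasis, mul_sum]
  refine sum_congr rfl fun i hi => ?_
  have hsign : ∏ j ∈ univ.erase i, (lam j - lam i) =
      (-1) ^ (n - 1) * ∏ j ∈ univ.erase i, (lam i - lam j) := by
    rw [show n - 1 = #(univ.erase i) by simp, ← prod_neg]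
    exact prod_congr rfl fun j _ => (neg_sub _ _).symm
  have hsq : ((-1 : ℝ) ^ (n - 1)) ^ 2 = 1 := by rw [← pow_mul, mul_comm, pow_mul]; norm_num
  rw [acoef_removeEntry lam i hk, basis_eq_C_nodalWeight_mul_nodal_erase_s9 hi, coeff_C_mul,
    nodalWeight, prod_inv_distrib, hsign, div_eq_mul_inv, mul_inv, ← inv_pow, inv_neg_one]
  linear_combination (nodal (univ.erase i) lam).coeff k *
    (∏ j ∈ univ.erase i, (lam i - lam j))⁻¹ * Real.exp (lam i * t) * hsq

/-- Relative ordering: a_{k,λ_{¬i}} v_{k-1,λ}(t) ≥ a_{k-1,λ_{¬i}} v_{k,λ}(t). -/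
theorem relative_vandermonde_basis_bound (n : ℕ) (lam : Fin n → ℝ)
    (h : Function.Injective lam) (hneg : ∀ i, lam i < 0)
    (i : Fin n) (k : ℕ) (hk1 : 1 ≤ k) (hk : k < n) (t : ℝ) (ht : 0 ≤ t) :
    acoef (removeEntry lam i) ((k : ℤ) - 1) * vbasisR lam (k : ℤ) t ≤
      acoef (removeEntry lam i) (k : ℤ) * vbasisR lam ((k : ℤ) - 1) t := by
  obtain ⟨m, rfl⟩ : ∃ m, k = m + 1 := ⟨k - 1, by omega⟩
  have hvs : Set.InjOn lam (univ : Finset (Fin n)) := h.injOn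
  have hcross := crossLogConcave_vandermondeBasis (hvs.mono (erase_subset i univ))
    (fun j _ => (hneg j).le) ht m m le_rfl
  rw [show ((m + 1 : ℕ) : ℤ) - 1 = m by push_cast; ring, acoef_removeEntry lam i (by omega),
    acoef_removeEntry lam i (by omega), vbasisR_eq_vandermondeBasis lam (by omega),
    vbasisR_eq_vandermondeBasis lam (by omega), vandermondeBasis_eq_erase_add hvs (mem_univ i),
    vandermondeBasis_eq_erase_add hvs (mem_univ i)]
  linarith
end

section
/- Let θ₀, …, θ_{n-1} : [0,∞) → ℝ be functions and β₀, …, β_{n-1} > 0 scalars such that: (i) θ_i(t) ≥ 0 for all i and t ≥ 0; (ii) β_i θ_i(t) ≥ β_j θ_j(t) whenever i ≤ j; (iii) θ₀(t) ≤ 1. Then for any vectors y₀, …, y_{n-1} ∈ ℝ^d and all t ≥ 0, the point x(t) = ∑_{i=0}^{n-1} y_i θ_i(t) lies in the convex hull of the n+1 points { ∑_{j=0}^{i-1} (β₀/β_j) y_j : i = 0, …, n } (where the i = 0 point is the origin). -/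
open Finset

/-- Simplicial trajectory bound from nonnegative, relatively ordered, bounded basis
functions. -/
theorem simplicial_trajectory_bound (n d : ℕ) (hn : 0 < n)
    (θ : Fin n → ℝ → ℝ) (β : Fin n → ℝ)
    (hβ : ∀ i, 0 < β i)
    (hnonneg : ∀ i, ∀ t : ℝ, 0 ≤ t → 0 ≤ θ i t)
    (horder : ∀ i j : Fin n, i ≤ j → ∀ t : ℝ, 0 ≤ t → β j * θ j t ≤ β i * θ i t)
    (hbound : ∀ t : ℝ, 0 ≤ t → θ ⟨0, hn⟩ t ≤ 1)
    (y : Fin n → (Fin d → ℝ)) (t : ℝ) (ht : 0 ≤ t) :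
    (∑ i : Fin n, θ i t • y i) ∈
      convexHull ℝ (Set.range fun i : Fin (n + 1) =>
        ∑ j ∈ Finset.univ.filter (fun j : Fin n => (j : ℕ) < (i : ℕ)),
          (β ⟨0, hn⟩ / β j) • y j) := by
  set β0 := β ⟨0, hn⟩ with hβ0def
  have hβ0 : 0 < β0 := hβ _
  set c : ℕ → ℝ := fun k => if h : k < n then β ⟨k, h⟩ * θ ⟨k, h⟩ t / β0 else 0 with hc
  set g : ℕ → ℝ := fun k => if k = 0 then 1 else c (k - 1) with hg
  set v : Fin (n + 1) → (Fin d → ℝ) := fun i =>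
    ∑ j ∈ Finset.univ.filter (fun j : Fin n => (j : ℕ) < (i : ℕ)), (β0 / β j) • y j with hv
  set lam : Fin (n + 1) → ℝ := fun i => g i - g ((i : ℕ) + 1) with hlam
  have hc_nonneg : ∀ k, 0 ≤ c k := by
    intro k
    rw [hc]
    dsimp only
    split
    · next h =>
      have := hnonneg ⟨k, h⟩ t ht
      have := (hβ ⟨k, h⟩).le
      positivity
    · exact le_refl 0
  have hc_mono : ∀ k l : ℕ, k ≤ l → c l ≤ c k := by
    intro k l hkl
    rw [hc]
    dsimp only
    split
    · next hl =>
      have hk : k < n := lt_of_le_of_lt hkl hl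
      rw [dif_pos hk]
      exact div_le_div_of_nonneg_right (horder ⟨k, hk⟩ ⟨l, hl⟩ hkl t ht) hβ0.le
    · exact hc_nonneg k
  have hc0 : c 0 ≤ 1 := by
    rw [hc]
    dsimp only
    rw [dif_pos hn]
    rw [div_le_one hβ0]
    calc β ⟨0, hn⟩ * θ ⟨0, hn⟩ t ≤ β ⟨0, hn⟩ * 1 := by
          exact mul_le_mul_of_nonneg_left (hbound t ht) (hβ ⟨0, hn⟩).le
      _ = β0 := by rw [mul_one]
  have hg_step : ∀ k : ℕ, g (k + 1) ≤ g k := by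
    intro k
    rw [hg]
    dsimp only
    cases k with
    | zero => simpa using hc0
    | succ m =>
      simp only [Nat.succ_ne_zero, if_false, Nat.add_sub_cancel]
      exact hc_mono m (m + 1) (Nat.le_succ m)
  have hlam_nonneg : ∀ i : Fin (n + 1), 0 ≤ lam i := fun i => sub_nonneg.2 (hg_step i)
  have hg0 : g 0 = 1 := by rw [hg]; simp
  have hgn : g (n + 1) = 0 := by
    rw [hg]
    simp only [Nat.succ_ne_zero, if_false, Nat.add_sub_cancel]
    rw [hc]
    simp
  have hsum : ∑ i : Fin (n + 1), lam i = 1 := by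
    rw [hlam]
    rw [Fin.sum_univ_eq_sum_range (fun k => g k - g (k + 1)) (n + 1)]
    rw [Finset.sum_range_sub' g (n + 1), hg0, hgn, sub_zero]
  have hgj : ∀ j : Fin n, g ((j : ℕ) + 1) = β j * θ j t / β0 := by
    intro j
    rw [hg]
    simp only [Nat.succ_ne_zero, if_false, Nat.add_sub_cancel]
    rw [hc]
    dsimp only
    rw [dif_pos j.isLt]
  have hSj : ∀ j : Fin n,
      (∑ i : Fin (n + 1), if (j : ℕ) < (i : ℕ) then lam i else 0) = β j * θ j t / β0 := by
    intro j
    rw [Fin.sum_univ_eq_sum_range (fun k => if (j : ℕ) < k then g k - g (k + 1) else 0) (n + 1)]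
    rw [← Finset.sum_filter]
    have hfil : (Finset.range (n + 1)).filter (fun k => (j : ℕ) < k)
        = Finset.Ico ((j : ℕ) + 1) (n + 1) := by
      ext k
      simp only [Finset.mem_filter, Finset.mem_range, Finset.mem_Ico]
      omega
    rw [hfil, Finset.sum_Ico_eq_sum_range]
    have hcount : n + 1 - ((j : ℕ) + 1) = n - (j : ℕ) := by omega
    rw [hcount]
    have : ∀ k, g ((j : ℕ) + 1 + k) - g ((j : ℕ) + 1 + k + 1)
        = (fun m => g ((j : ℕ) + 1 + m)) k - (fun m => g ((j : ℕ) + 1 + m)) (k + 1) := by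
      intro k; dsimp only; ring_nf
    calc (∑ k ∈ Finset.range (n - (j : ℕ)), (g ((j : ℕ) + 1 + k) - g ((j : ℕ) + 1 + k + 1)))
        = ∑ k ∈ Finset.range (n - (j : ℕ)),
            ((fun m => g ((j : ℕ) + 1 + m)) k - (fun m => g ((j : ℕ) + 1 + m)) (k + 1)) := by
          exact Finset.sum_congr rfl fun k _ => rfl
      _ = g ((j : ℕ) + 1 + 0) - g ((j : ℕ) + 1 + (n - (j : ℕ))) :=
          Finset.sum_range_sub' (fun m => g ((j : ℕ) + 1 + m)) (n - (j : ℕ))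
      _ = β j * θ j t / β0 := by
          have h1 : (j : ℕ) + 1 + (n - (j : ℕ)) = n + 1 := by
            have := j.isLt; omega
          rw [h1, hgn, sub_zero, Nat.add_zero, hgj]
  have key : (∑ i : Fin n, θ i t • y i) = ∑ i : Fin (n + 1), lam i • v i := by
    rw [hv]
    dsimp only
    simp_rw [Finset.smul_sum, Finset.sum_filter]
    rw [Finset.sum_comm]
    refine Finset.sum_congr rfl fun j _ => ?_
    have : ∀ i : Fin (n + 1),
        (if (j : ℕ) < (i : ℕ) then lam i • (β0 / β j) • y j else 0)
        = (if (j : ℕ) < (i : ℕ) then lam i else 0) • (β0 / β j) • y j := by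
      intro i
      split <;> simp
    simp_rw [this]
    rw [← Finset.sum_smul, hSj j, smul_smul]
    congr 1
    rw [div_mul_div_comm, mul_comm β0 (β j), mul_div_mul_comm,
      div_self hβ0.ne', mul_one, mul_comm (β j) (θ j t), mul_div_assoc,
      div_self (hβ j).ne', mul_one]
  rw [key]
  refine (convex_convexHull ℝ _).sum_mem (fun i _ => hlam_nonneg i) hsum fun i _ => ?_
  -- (fun i _ => hlam_nonneg i) fun i _ => ?_
  exact subset_convexHull ℝ _ ⟨i, rfl⟩
end

section
/- Let Q ∈ ℝ^{n×m} with QᵀQ = I_m, p ∈ ℝⁿ, and let E(q, M, ρ) ⊆ ℝⁿ be an ellipsoid with PSD shape matrix M and radius ρ. Then the image of E(q, M, ρ) under the metric projection onto the affine subspace A(Q,p) = {Qy + p : y ∈ ℝ^m} equals the ellipsoid E(QQᵀ(q - p) + p, QQᵀ M QQᵀ, ρ), which is the image under the map y ↦ Qy + p of the lower-dimensional ellipsoid E(Qᵀ(q-p), Qᵀ M Q, ρ) ⊆ ℝ^m. -/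
open Matrix

lemma range_AAT {n k : ℕ} (A : Matrix (Fin n) (Fin k) ℝ) (u : Fin k → ℝ) :
    ∃ v : Fin n → ℝ, (A * Aᵀ).mulVec v = A.mulVec u := by
  have hle : LinearMap.range (A * Aᵀ).mulVecLin ≤ LinearMap.range A.mulVecLin := by
    rintro x ⟨v, rfl⟩
    exact ⟨Aᵀ.mulVec v,
      by simp [Matrix.mulVecLin_apply, ← Matrix.mulVec_mulVec, Matrix.mulVec_transpose]⟩
  have heq : LinearMap.range (A * Aᵀ).mulVecLin = LinearMap.range A.mulVecLin :=
    Submodule.eq_of_le_of_finrank_eq hle (Matrix.rank_self_mul_transpose A)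
  have : A.mulVec u ∈ LinearMap.range (A * Aᵀ).mulVecLin := by
    rw [heq]; exact ⟨u, rfl⟩
  obtain ⟨v, hv⟩ := this
  exact ⟨v, hv⟩

lemma dot_cs {k : ℕ} (a b : Fin k → ℝ) : (a ⬝ᵥ b) ^ 2 ≤ (a ⬝ᵥ a) * (b ⬝ᵥ b) := by
  simpa [dotProduct, sq] using
    Finset.sum_mul_sq_le_sq_mul_sq Finset.univ a b

lemma dot_self_nonneg' {k : ℕ} (a : Fin k → ℝ) : 0 ≤ a ⬝ᵥ a :=
  Finset.sum_nonneg fun _ _ => mul_self_nonneg _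

/-- The image of the ρ-ball under `A` depends only on `A * Aᵀ`. -/
lemma ball_image_eq {n k : ℕ} (A : Matrix (Fin n) (Fin k) ℝ) (ρ : ℝ) (hρ : 0 ≤ ρ) :
    {x : Fin n → ℝ | ∃ u : Fin k → ℝ, u ⬝ᵥ u ≤ ρ ^ 2 ∧ x = A.mulVec u} =
      {x : Fin n → ℝ | ∃ v : Fin n → ℝ,
        v ⬝ᵥ (A * Aᵀ).mulVec v ≤ ρ ^ 2 ∧ x = (A * Aᵀ).mulVec v} := by
  have hρ2 : (0:ℝ) ≤ ρ ^ 2 := sq_nonneg ρ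
  ext x
  constructor
  · rintro ⟨u, hu, rfl⟩
    obtain ⟨v, hv⟩ := range_AAT A u
    refine ⟨v, ?_, hv.symm⟩
    set a : Fin k → ℝ := Aᵀ.mulVec v with ha
    have h1 : v ⬝ᵥ (A * Aᵀ).mulVec v = a ⬝ᵥ a := by
      rw [← Matrix.mulVec_mulVec, Matrix.dotProduct_mulVec, ha, ← Matrix.mulVec_transpose]
    have h2 : v ⬝ᵥ (A * Aᵀ).mulVec v = a ⬝ᵥ u := by
      rw [hv, Matrix.dotProduct_mulVec, ha, ← Matrix.mulVec_transpose]
    rw [h1]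
    have hcs : (a ⬝ᵥ u) ^ 2 ≤ (a ⬝ᵥ a) * (u ⬝ᵥ u) := dot_cs a u
    have ht0 : 0 ≤ a ⬝ᵥ a := dot_self_nonneg' a
    have key : a ⬝ᵥ a = a ⬝ᵥ u := by rw [← h1, ← h2]
    nlinarith [hcs, ht0, hu]
  · rintro ⟨v, hv, rfl⟩
    refine ⟨Aᵀ.mulVec v, ?_, ?_⟩
    · have h : v ⬝ᵥ (A * Aᵀ).mulVec v = (Aᵀ.mulVec v) ⬝ᵥ (Aᵀ.mulVec v) := by
        rw [← Matrix.mulVec_mulVec, Matrix.dotProduct_mulVec, ← Matrix.mulVec_transpose]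
      linarith
    · rw [← Matrix.mulVec_mulVec]

/-- Two square-root factors with the same square give the same ellipsoid-ball. -/
lemma ball_image_congr {n k l : ℕ} (A : Matrix (Fin n) (Fin k) ℝ)
    (B : Matrix (Fin n) (Fin l) ℝ) (h : A * Aᵀ = B * Bᵀ) (ρ : ℝ) (hρ : 0 ≤ ρ) :
    {x : Fin n → ℝ | ∃ u : Fin k → ℝ, u ⬝ᵥ u ≤ ρ ^ 2 ∧ x = A.mulVec u} =
      {x : Fin n → ℝ | ∃ u : Fin l → ℝ, u ⬝ᵥ u ≤ ρ ^ 2 ∧ x = B.mulVec u} := by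
  rw [ball_image_eq A ρ hρ, ball_image_eq B ρ hρ, h]

lemma translated_subset {n k l : ℕ} (c : Fin n → ℝ) (A : Matrix (Fin n) (Fin k) ℝ)
    (B : Matrix (Fin n) (Fin l) ℝ) (h : A * Aᵀ = B * Bᵀ) (ρ : ℝ) (hρ : 0 ≤ ρ) :
    {x : Fin n → ℝ | ∃ u : Fin k → ℝ, u ⬝ᵥ u ≤ ρ ^ 2 ∧ x = c + A.mulVec u} ⊆
      {x : Fin n → ℝ | ∃ u : Fin l → ℝ, u ⬝ᵥ u ≤ ρ ^ 2 ∧ x = c + B.mulVec u} := by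
  have hb := ball_image_congr A B h ρ hρ
  rintro x ⟨u, hu, rfl⟩
  have hm : A.mulVec u ∈ {y : Fin n → ℝ | ∃ u : Fin k → ℝ, u ⬝ᵥ u ≤ ρ ^ 2 ∧ y = A.mulVec u} :=
    ⟨u, hu, rfl⟩
  rw [hb] at hm
  obtain ⟨w, hw, hw2⟩ := hm
  exact ⟨w, hw, by rw [hw2]⟩

lemma translated_congr {n k l : ℕ} (c : Fin n → ℝ) (A : Matrix (Fin n) (Fin k) ℝ)
    (B : Matrix (Fin n) (Fin l) ℝ) (h : A * Aᵀ = B * Bᵀ) (ρ : ℝ) (hρ : 0 ≤ ρ) :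
    {x : Fin n → ℝ | ∃ u : Fin k → ℝ, u ⬝ᵥ u ≤ ρ ^ 2 ∧ x = c + A.mulVec u} =
      {x : Fin n → ℝ | ∃ u : Fin l → ℝ, u ⬝ᵥ u ≤ ρ ^ 2 ∧ x = c + B.mulVec u} :=
  Set.Subset.antisymm (translated_subset c A B h ρ hρ) (translated_subset c B A h.symm ρ hρ)

/-- Ellipsoid with center `q`, square-root shape matrix `S`, and radius `ρ`. -/
def ell {n : ℕ} (q : Fin n → ℝ) (S : Matrix (Fin n) (Fin n) ℝ) (ρ : ℝ) :
    Set (Fin n → ℝ) :=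
  {x | ∃ u : Fin n → ℝ, u ⬝ᵥ u ≤ ρ ^ 2 ∧ x = q + S.mulVec u}

/-- Orthogonal projection of an ellipsoid onto the affine subspace {Qy + p} is the
ellipsoid E(QQᵀ(q-p)+p, QQᵀMQQᵀ, ρ), which is the image under y ↦ Qy + p of the
lower-dimensional ellipsoid E(Qᵀ(q-p), QᵀMQ, ρ). -/
theorem ellipsoid_orthogonal_projection (n m : ℕ)
    (Q : Matrix (Fin n) (Fin m) ℝ) (hQ : Qᵀ * Q = 1) (p : Fin n → ℝ)
    (q : Fin n → ℝ) (M : Matrix (Fin n) (Fin n) ℝ) (hM : M.PosSemidef)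
    (S : Matrix (Fin n) (Fin n) ℝ) (hS : S * Sᵀ = M)
    (T : Matrix (Fin n) (Fin n) ℝ) (hT : T * Tᵀ = Q * Qᵀ * M * (Q * Qᵀ))
    (U : Matrix (Fin m) (Fin m) ℝ) (hU : U * Uᵀ = Qᵀ * M * Q)
    (ρ : ℝ) (hρ : 0 ≤ ρ) :
    (fun x => Q.mulVec (Qᵀ.mulVec (x - p)) + p) '' ell q S ρ =
        ell (Q.mulVec (Qᵀ.mulVec (q - p)) + p) T ρ ∧
      ell (Q.mulVec (Qᵀ.mulVec (q - p)) + p) T ρ =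
        (fun y => Q.mulVec y + p) '' ell (Qᵀ.mulVec (q - p)) U ρ := by
  set c : Fin n → ℝ := Q.mulVec (Qᵀ.mulVec (q - p)) + p with hc
  -- matrix products
  have hA1 : (Q * Qᵀ * S) * (Q * Qᵀ * S)ᵀ = T * Tᵀ := by
    rw [hT, ← hS]
    simp [Matrix.transpose_mul, Matrix.mul_assoc]
  have hA2 : (Q * U) * (Q * U)ᵀ = T * Tᵀ := by
    have : (Q * U) * (Q * U)ᵀ = Q * (U * Uᵀ) * Qᵀ := by
      simp [Matrix.transpose_mul, Matrix.mul_assoc]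
    rw [this, hU, hT]
    simp [Matrix.mul_assoc]
  -- step 1: the projected image as a translated ball
  have himg1 : (fun x => Q.mulVec (Qᵀ.mulVec (x - p)) + p) '' ell q S ρ =
      {z : Fin n → ℝ | ∃ u : Fin n → ℝ, u ⬝ᵥ u ≤ ρ ^ 2 ∧ z = c + (Q * Qᵀ * S).mulVec u} := by
    ext z
    constructor
    · rintro ⟨x, ⟨u, hu, rfl⟩, rfl⟩
      refine ⟨u, hu, ?_⟩
      dsimp only
      simp only [hc, add_sub_right_comm, Matrix.mulVec_add, Matrix.mulVec_mulVec, Matrix.mul_assoc]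
      abel
    · rintro ⟨u, hu, rfl⟩
      refine ⟨q + S.mulVec u, ⟨u, hu, rfl⟩, ?_⟩
      dsimp only
      simp only [hc, add_sub_right_comm, Matrix.mulVec_add, Matrix.mulVec_mulVec, Matrix.mul_assoc]
      abel
  -- step 2: ell c T ρ is definitionally a translated ball
  have hellT : ell c T ρ =
      {z : Fin n → ℝ | ∃ u : Fin n → ℝ, u ⬝ᵥ u ≤ ρ ^ 2 ∧ z = c + T.mulVec u} := rfl
  -- step 3: image of lower-dimensional ellipsoid
  have himg2 : (fun y => Q.mulVec y + p) '' ell (Qᵀ.mulVec (q - p)) U ρ =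
      {z : Fin n → ℝ | ∃ u : Fin m → ℝ, u ⬝ᵥ u ≤ ρ ^ 2 ∧ z = c + (Q * U).mulVec u} := by
    ext z
    constructor
    · rintro ⟨y, ⟨u, hu, rfl⟩, rfl⟩
      refine ⟨u, hu, ?_⟩
      dsimp only
      simp only [hc, add_sub_right_comm, Matrix.mulVec_add, Matrix.mulVec_mulVec, Matrix.mul_assoc]
      abel
    · rintro ⟨u, hu, rfl⟩
      refine ⟨Qᵀ.mulVec (q - p) + U.mulVec u, ⟨u, hu, rfl⟩, ?_⟩
      dsimp only
      simp only [hc, add_sub_right_comm, Matrix.mulVec_add, Matrix.mulVec_mulVec, Matrix.mul_assoc]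
      abel
  constructor
  · rw [himg1, hellT]
    exact translated_congr c (Q * Qᵀ * S) T hA1 ρ hρ
  · rw [himg2, hellT]
    exact translated_congr c T (Q * U) hA2.symm ρ hρ
end
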